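/- arXiv:1404.6632 — 9 statements merged into one kernel-verified Lean document; each statement's English description precedes it below -/
import Mathlib

section
/- Let M = (Q, Σ, δ, q₀, F) be a DFA with |Q| = n and let S ⊆ Q. Then the state complexity of the atom A_S = {w ∈ Σ* : ∀ q ∈ Q, q·w ∈ F ↔ q ∈ S} is at most Ψ(n, |S|). -/
/-- `Psi n s` of Brzozowski–Tamm: the tight upper bound on the state complexity
of an atom `A_S` with `|S| = s` of a language of state complexity `n`. -/
def Psi (n s : ℕ) : ℕ :=
  if s = 0 ∨ s = n then 2 ^ n - 1
  else 1 + ∑ k ∈ Finset.Icc 1 s, ∑ l ∈ Finset.Icc 1 (n - s),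
    Nat.choose n k * Nat.choose (n - k) l

/-- The Myhill–Nerode right congruence of a language `K`. -/
def rightCong {A : Type*} (K : Set (List A)) : Setoid (List A) where
  r x y := ∀ z, x ++ z ∈ K ↔ y ++ z ∈ K
  iseqv := ⟨fun _ _ => Iff.rfl, fun h z => (h z).symm, fun h1 h2 z => (h1 z).trans (h2 z)⟩

/-- The state complexity of a language: the number of classes of its
Myhill–Nerode right congruence. -/
noncomputable def stateComplexity {A : Type*} (K : Set (List A)) : ℕ :=
  Nat.card (Quotient (rightCong K))

/-- The atom `A_S` of the language of the DFA `M`. -/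
def atom {A Q : Type*} (M : DFA A Q) (S : Set Q) : Set (List A) :=
  {w | ∀ q, M.evalFrom q w ∈ M.accept ↔ q ∈ S}

/-- A DFA is minimal iff all its states are reachable and pairwise distinguishable. -/
def IsMinimal {A Q : Type*} (M : DFA A Q) : Prop :=
  (∀ q, ∃ w : List A, M.evalFrom M.start w = q) ∧
  ∀ p q : Q, p ≠ q → ∃ w : List A,
    ¬(M.evalFrom p w ∈ M.accept ↔ M.evalFrom q w ∈ M.accept)

/-!
The quotient `x⁻¹ A_S` of the atom by a word `x` is determined by the pair `(S·x, Sᶜ·x)`: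
a word `z` lies in it iff `S·x·z ⊆ F` and `Sᶜ·x·z ∩ F = ∅`. If the two images meet, the
quotient is empty; otherwise `(S·x, Sᶜ·x)` is a pair of disjoint sets, nonempty when `S` and
`Sᶜ` are, of sizes at most `|S|` and `n - |S|`, and there are at most
`∑ₖ ∑ₗ C(n, k) C(n - k, l)` such pairs. When `S = ∅` or `S = Q` one image is empty and the
other is the nonempty set `Q·x`, which leaves `2ⁿ - 1` possibilities.
-/

open Finset

theorem stateComplexity_le_card_of_forall_mem {A β : Type*} (K : Set (List A))
    (φ : List A → β) (T : Finset β) (hT : ∀ x, φ x ∈ T)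
    (hφ : ∀ x y, φ x = φ y → rightCong K x y) :
    stateComplexity K ≤ T.card := by
  have hinj : Function.Injective fun c : Quotient (rightCong K) => (⟨φ c.out, hT _⟩ : T) := by
    intro c d hcd
    rw [← Quotient.out_eq c, ← Quotient.out_eq d]
    exact Quotient.sound (hφ _ _ (congrArg Subtype.val hcd))
  simpa [stateComplexity] using Nat.card_le_card_of_injective _ hinj

section Counting

variable (Q : Type*) [Fintype Q] [DecidableEq Q]

def disjointPairs (s t : ℕ) : Finset (Finset Q × Finset Q) :=
  univ.filter fun p => Disjoint p.1 p.2 ∧ p.1.card ∈ Icc 1 s ∧ p.2.card ∈ Icc 1 t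

theorem card_filter_disjoint_card_eq_le (k l : ℕ) :
    (univ.filter fun p : Finset Q × Finset Q =>
      Disjoint p.1 p.2 ∧ p.1.card = k ∧ p.2.card = l).card ≤
      (Fintype.card Q).choose k * (Fintype.card Q - k).choose l := by
  have hsub : (univ.filter fun p : Finset Q × Finset Q =>
      Disjoint p.1 p.2 ∧ p.1.card = k ∧ p.2.card = l) ⊆
      (powersetCard k univ).biUnion fun X => (powersetCard l Xᶜ).image (Prod.mk X) := by
    rintro ⟨X, Y⟩ hXY
    simp only [mem_filter, mem_univ, true_and] at hXY
    obtain ⟨hdisj, rfl, rfl⟩ := hXY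
    simp only [mem_biUnion, mem_image, mem_powersetCard, Prod.mk.injEq]
    exact ⟨X, ⟨subset_univ X, rfl⟩, Y,
      ⟨fun y hy => mem_compl.2 (disjoint_right.1 hdisj hy), rfl⟩, rfl, rfl⟩
  refine (card_le_card hsub).trans (card_biUnion_le.trans ?_)
  calc ∑ X ∈ powersetCard k univ, ((powersetCard l Xᶜ).image (Prod.mk X)).card
      ≤ ∑ X ∈ powersetCard k (univ : Finset Q), (Fintype.card Q - k).choose l := by
        refine sum_le_sum fun X hX => card_image_le.trans_eq ?_
        rw [card_powersetCard, card_compl, mem_powersetCard_univ.1 hX]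
    _ = _ := by rw [sum_const, card_powersetCard, card_univ, smul_eq_mul]

theorem card_disjointPairs_le (s t : ℕ) :
    (disjointPairs Q s t).card ≤ ∑ k ∈ Icc 1 s, ∑ l ∈ Icc 1 t,
      (Fintype.card Q).choose k * (Fintype.card Q - k).choose l := by
  have hsub : disjointPairs Q s t ⊆ (Icc 1 s).biUnion fun k => (Icc 1 t).biUnion fun l =>
      univ.filter fun p : Finset Q × Finset Q =>
        Disjoint p.1 p.2 ∧ p.1.card = k ∧ p.2.card = l := by
    intro p hp
    simp only [disjointPairs, mem_filter, mem_univ, true_and] at hp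
    simp only [mem_biUnion, mem_filter, mem_univ, true_and]
    exact ⟨_, hp.2.1, _, hp.2.2, hp.1, rfl, rfl⟩
  refine (card_le_card hsub).trans (card_biUnion_le.trans (sum_le_sum fun k _ => ?_))
  exact card_biUnion_le.trans (sum_le_sum fun l _ => card_filter_disjoint_card_eq_le Q k l)

end Counting

section AtomQuotients

variable {A Q : Type*} [Fintype Q] [DecidableEq Q] (M : DFA A Q) (S : Finset Q)

def atomImages (x : List A) : Finset Q × Finset Q :=
  (S.image (M.evalFrom · x), Sᶜ.image (M.evalFrom · x))

def atomSignature (x : List A) : Option (Finset Q × Finset Q) :=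
  if Disjoint (atomImages M S x).1 (atomImages M S x).2 then some (atomImages M S x) else none

theorem append_mem_atom_iff (x z : List A) :
    x ++ z ∈ atom M ↑S ↔ (∀ p ∈ (atomImages M S x).1, M.evalFrom p z ∈ M.accept) ∧
      ∀ p ∈ (atomImages M S x).2, M.evalFrom p z ∉ M.accept := by
  simp only [atom, atomImages, Set.mem_ofPred_eq, DFA.evalFrom_of_append, forall_mem_image,
    mem_compl, Finset.mem_coe]
  constructor
  · intro h
    exact ⟨fun q hq => (h q).2 hq, fun q hq hacc => hq ((h q).1 hacc)⟩
  · rintro ⟨hS, hSc⟩ q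
    by_cases hq : q ∈ S
    · exact ⟨fun _ => hq, fun _ => hS hq⟩
    · exact ⟨fun hacc => absurd hacc (hSc hq), fun h => absurd h hq⟩

theorem append_notMem_atom_of_not_disjoint {x : List A}
    (hx : ¬Disjoint (atomImages M S x).1 (atomImages M S x).2) (z : List A) :
    x ++ z ∉ atom M ↑S := by
  intro hxz
  obtain ⟨p, hp, hp'⟩ := not_disjoint_iff.1 hx
  obtain ⟨hacc, hrej⟩ := (append_mem_atom_iff M S x z).1 hxz
  exact hrej p hp' (hacc p hp)

theorem rightCong_atom_of_atomImages_eq {x y : List A} (h : atomImages M S x = atomImages M S y) :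
    rightCong (atom M ↑S) x y := fun z => by
  rw [append_mem_atom_iff, append_mem_atom_iff, h]

theorem rightCong_atom_of_atomSignature_eq {x y : List A}
    (h : atomSignature M S x = atomSignature M S y) : rightCong (atom M ↑S) x y := by
  unfold atomSignature at h
  split_ifs at h with hx hy hy
  · exact rightCong_atom_of_atomImages_eq M S (Option.some_injective _ h)
  · exact fun z => iff_of_false (append_notMem_atom_of_not_disjoint M S hx z)
      (append_notMem_atom_of_not_disjoint M S hy z)

theorem atomSignature_mem_disjointPairs (hS : S.Nonempty) (hSc : Sᶜ.Nonempty) (x : List A) :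
    atomSignature M S x ∈ insert none ((disjointPairs Q S.card Sᶜ.card).image some) := by
  unfold atomSignature
  split_ifs with hdisj
  · refine mem_insert_of_mem (mem_image_of_mem _ ?_)
    simp only [disjointPairs, mem_filter, mem_univ, true_and, mem_Icc, atomImages]
    exact ⟨hdisj, ⟨card_pos.2 (hS.image _), card_image_le⟩, card_pos.2 (hSc.image _),
      card_image_le⟩
  · exact mem_insert_self _ _

/-- When `S` is `∅` or `Q`, one component of `atomImages` is empty and the other is `Q·x`. -/
theorem atomImages_eq_of_image_univ_eq (hS : S = ∅ ∨ S = univ) {x y : List A}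
    (h : univ.image (M.evalFrom · x) = univ.image (M.evalFrom · y)) :
    atomImages M S x = atomImages M S y := by
  rcases hS with rfl | rfl <;> simp [atomImages, h]

theorem stateComplexity_atom_le_of_eq_empty_or_univ (hS : S = ∅ ∨ S = univ) :
    stateComplexity (atom M ↑S) ≤ 2 ^ Fintype.card Q - 1 := by
  have hmem : ∀ x, univ.image (M.evalFrom · x) ∈ (univ : Finset (Finset Q)).erase ∅ := fun x =>
    mem_erase.2 ⟨(univ_nonempty_iff.2 ⟨M.start⟩).image _ |>.ne_empty, mem_univ _⟩
  refine (stateComplexity_le_card_of_forall_mem _ _ _ hmem fun x y h =>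
    rightCong_atom_of_atomImages_eq M S (atomImages_eq_of_image_univ_eq M S hS h)).trans_eq ?_
  rw [card_erase_of_mem (mem_univ _), card_univ, Fintype.card_finset]

theorem stateComplexity_atom_le_of_nonempty (hS : S.Nonempty) (hSc : Sᶜ.Nonempty) :
    stateComplexity (atom M ↑S) ≤ 1 + ∑ k ∈ Icc 1 S.card, ∑ l ∈ Icc 1 (Fintype.card Q - S.card),
      (Fintype.card Q).choose k * (Fintype.card Q - k).choose l := by
  refine (stateComplexity_le_card_of_forall_mem _ _ _ (atomSignature_mem_disjointPairs M S hS hSc)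
    fun x y => rightCong_atom_of_atomSignature_eq M S).trans ?_
  calc (insert none ((disjointPairs Q S.card Sᶜ.card).image some)).card
      ≤ 1 + (disjointPairs Q S.card Sᶜ.card).card := by
        rw [card_insert_of_notMem (by simp), card_image_of_injective _ (Option.some_injective _),
          add_comm]
    _ ≤ _ := by
        rw [← card_compl S]
        exact Nat.add_le_add_left (card_disjointPairs_le Q _ _) 1

end AtomQuotients

theorem statement1_general {A Q : Type*} [Fintype Q] (M : DFA A Q)
    (n : ℕ) (hQ : Fintype.card Q = n) (S : Set Q) :
    stateComplexity (atom M S) ≤ Psi n S.ncard := by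
  classical
  obtain ⟨S, rfl⟩ : ∃ T : Finset Q, ↑T = S := ⟨S.toFinset, S.coe_toFinset⟩
  subst hQ
  rw [Set.ncard_coe_finset, Psi]
  split_ifs with hcard
  · refine stateComplexity_atom_le_of_eq_empty_or_univ M S ?_
    rwa [card_eq_zero, card_eq_iff_eq_univ] at hcard
  · rw [not_or] at hcard
    have hSc : Sᶜ.Nonempty := by
      rw [← card_pos, card_compl]
      exact Nat.sub_pos_of_lt (lt_of_le_of_ne (card_le_univ S) hcard.2)
    exact stateComplexity_atom_le_of_nonempty M S (card_ne_zero.1 hcard.1) hSc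

/-- the state complexity of the atom `A_S` is at most `Ψ(n, |S|)`. -/
theorem statement1 {A Q : Type*} [Fintype A] [Fintype Q] (M : DFA A Q)
    (n : ℕ) (hQ : Fintype.card Q = n) (S : Set Q) :
    stateComplexity (atom M S) ≤ Psi n S.ncard :=
  statement1_general M n hQ S
end

section
/- Let M = (Q, Σ, δ, q₀, F) be a minimal DFA with |Q| = n > 1. If every function f : Q → Q is induced by some nonempty word (i.e., T(M) is the full transformation monoid on Q), then for every subset S ⊆ Q the atom A_S is nonempty; in particular the recognized language has 2^n atoms. -/
/-!
Two distinct states are distinguished by some word, so `M` has an accepting state `a` and a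
rejecting state `b`. For any `S ⊆ Q`, a word inducing the map sending `S` to `a` and its
complement to `b` lies in `A_S`. Hence all `2 ^ n` atoms are nonempty.
-/

theorem Set.nonempty_and_compl_nonempty_of_not_iff {α : Type*} {s : Set α} {x y : α}
    (h : ¬(x ∈ s ↔ y ∈ s)) : s.Nonempty ∧ sᶜ.Nonempty := by
  by_cases hx : x ∈ s
  · exact ⟨⟨x, hx⟩, y, fun hy => h (iff_of_true hx hy)⟩
  · exact ⟨⟨y, by tauto⟩, x, hx⟩

section

variable {A Q : Type*} (M : DFA A Q)

theorem IsMinimal.accept_nonempty_and_compl_nonempty [Nontrivial Q] (hmin : IsMinimal M) :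
    M.accept.Nonempty ∧ M.acceptᶜ.Nonempty := by
  obtain ⟨p, q, hpq⟩ := exists_pair_ne Q
  obtain ⟨w, hw⟩ := hmin.2 p q hpq
  exact Set.nonempty_and_compl_nonempty_of_not_iff hw

theorem atom_nonempty_of_forall_exists_evalFrom_eq (hacc : M.accept.Nonempty)
    (hrej : M.acceptᶜ.Nonempty) (hfull : ∀ f : Q → Q, ∃ w : List A, (M.evalFrom · w) = f)
    (S : Set Q) : (atom M S).Nonempty := by
  classical
  obtain ⟨a, ha⟩ := hacc
  obtain ⟨b, hb⟩ := hrej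
  obtain ⟨w, hw⟩ := hfull fun q => if q ∈ S then a else b
  refine ⟨w, fun q => ?_⟩
  rw [congrFun hw q]
  by_cases hq : q ∈ S <;> simp_all

end

theorem statement2_general {A Q : Type*} [Fintype Q] (M : DFA A Q)
    (n : ℕ) (hQ : Fintype.card Q = n) (hn : 1 < n) (hmin : IsMinimal M)
    (hfull : ∀ f : Q → Q, ∃ w : List A, w ≠ [] ∧ (fun q => M.evalFrom q w) = f) :
    (∀ S : Set Q, (atom M S).Nonempty) ∧
      Nat.card {S : Set Q // (atom M S).Nonempty} = 2 ^ n := by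
  have : Nontrivial Q := Fintype.one_lt_card_iff_nontrivial.mp (hQ ▸ hn)
  obtain ⟨hacc, hrej⟩ := hmin.accept_nonempty_and_compl_nonempty
  have hatoms := atom_nonempty_of_forall_exists_evalFrom_eq M hacc hrej
    fun f => (hfull f).imp fun _ hw => hw.2
  refine ⟨hatoms, ?_⟩
  rw [Nat.card_congr (Equiv.subtypeUnivEquiv hatoms), Nat.card_eq_fintype_card,
    Fintype.card_set, hQ]

/-- if the transformation semigroup of a minimal DFA with `n > 1`
states is the full transformation monoid, then every atom `A_S` is nonempty;
in particular the recognized language has `2 ^ n` atoms. -/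
theorem statement2 {A Q : Type*} [Fintype A] [Fintype Q] (M : DFA A Q)
    (n : ℕ) (hQ : Fintype.card Q = n) (hn : 1 < n) (hmin : IsMinimal M)
    (hfull : ∀ f : Q → Q, ∃ w : List A, w ≠ [] ∧ (fun q => M.evalFrom q w) = f) :
    (∀ S : Set Q, (atom M S).Nonempty) ∧
      Nat.card {S : Set Q // (atom M S).Nonempty} = 2 ^ n :=
  statement2_general M n hQ hn hmin hfull
end

section
/- Let M = (Q, Σ, δ, q₀, F) be a minimal DFA with |Q| = n ≥ 3 and let S ⊆ Q be such that A_S is nonempty and has state complexity Ψ(n, |S|). Then P(M) is |S|-set-transitive: for all X, Y ⊆ Q with |X| = |Y| = |S| there is a word w inducing a permutation of Q with X·w = Y. -/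
open Function

namespace DFA

open Set

variable {A Q : Type*} (M : DFA A Q)

theorem evalFrom_flatten_replicate (u : List A) (k : ℕ) (q : Q) :
    M.evalFrom q (List.replicate k u).flatten = (fun p => M.evalFrom p u)^[k] q := by
  induction k generalizing q with
  | zero => rfl
  | succ k ih =>
    rw [List.replicate_succ, List.flatten_cons, evalFrom_of_append, iterate_succ_apply, ih]

theorem exists_evalFrom_eq_symm [Finite Q] {u : List A}
    (hu : Bijective fun q => M.evalFrom q u) :
    ∃ v : List A, ∀ q, M.evalFrom q v = (Equiv.ofBijective _ hu).symm q := by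
  set e : Equiv.Perm Q := Equiv.ofBijective _ hu
  obtain ⟨k, hk⟩ : e⁻¹ ∈ Submonoid.powers e :=
    mem_powers_iff_mem_zpowers.2 (inv_mem (Subgroup.mem_zpowers e))
  refine ⟨(List.replicate k u).flatten, fun q => ?_⟩
  rw [evalFrom_flatten_replicate, ← Equiv.Perm.inv_def, ← hk]
  rfl

theorem exists_bijective_image_eq_of_image_eq [Finite Q] {S X Y : Set Q} {u v : List A}
    (hu : Bijective fun q => M.evalFrom q u) (huX : (fun q => M.evalFrom q u) '' S = X)
    (hv : Bijective fun q => M.evalFrom q v) (hvY : (fun q => M.evalFrom q v) '' S = Y) :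
    ∃ w : List A, Bijective (fun q => M.evalFrom q w) ∧ (fun q => M.evalFrom q w) '' X = Y := by
  obtain ⟨u', hu'⟩ := M.exists_evalFrom_eq_symm hu
  have hcomp : (fun q => M.evalFrom q (u' ++ v)) = (fun q => M.evalFrom q v) ∘
      (Equiv.ofBijective _ hu).symm := by
    ext q
    simp only [evalFrom_of_append, hu', comp_apply]
  refine ⟨u' ++ v, ?_, ?_⟩
  · rw [hcomp]
    exact hv.comp (Equiv.bijective _)
  · rw [hcomp, image_comp, ← huX, ← hvY]
    exact congrArg _ ((Equiv.ofBijective _ hu).symm_image_image S)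

end DFA

section Counting

open Finset

variable (Q : Type*) [Fintype Q] [DecidableEq Q]

theorem card_filter_disjoint_card_eq (k l : ℕ) :
    #{pr : Finset Q × Finset Q | Disjoint pr.1 pr.2 ∧ #pr.1 = k ∧ #pr.2 = l} =
      (Fintype.card Q).choose k * (Fintype.card Q - k).choose l := by
  have hpairs : ({pr : Finset Q × Finset Q | Disjoint pr.1 pr.2 ∧ #pr.1 = k ∧ #pr.2 = l} :
      Finset _) = (powersetCard k univ).biUnion fun P => {P} ×ˢ powersetCard l Pᶜ := by
    ext ⟨P, R⟩
    simp only [mem_filter, mem_univ, true_and, mem_biUnion, mem_powersetCard, subset_univ,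
      mem_product, mem_singleton, subset_compl_iff_disjoint_left]
    exact ⟨fun ⟨hd, hk, hl⟩ => ⟨P, hk, rfl, hd, hl⟩,
      fun ⟨_, hk, rfl, hd, hl⟩ => ⟨hd, hk, hl⟩⟩
  rw [hpairs, card_biUnion, sum_congr rfl fun P hP => ?_, sum_const, card_powersetCard,
    card_univ, smul_eq_mul]
  · rw [card_product, card_singleton, one_mul, card_powersetCard, card_compl,
      (mem_powersetCard.1 hP).2]
  · intro P _ P' _ hne
    simp only [Function.onFun, disjoint_left, mem_product, mem_singleton]
    rintro _ ⟨rfl, -⟩ ⟨rfl, -⟩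
    exact hne rfl

def boundedDisjointPairs (s t : ℕ) : Finset (Finset Q × Finset Q) :=
  {pr | Disjoint pr.1 pr.2 ∧ #pr.1 ∈ Icc 1 s ∧ #pr.2 ∈ Icc 1 t}

theorem card_boundedDisjointPairs (s t : ℕ) :
    #(boundedDisjointPairs Q s t) = ∑ k ∈ Icc 1 s, ∑ l ∈ Icc 1 t,
      (Fintype.card Q).choose k * (Fintype.card Q - k).choose l := by
  rw [boundedDisjointPairs, card_eq_sum_card_fiberwise (f := fun pr => (#pr.1, #pr.2))
    (t := Icc 1 s ×ˢ Icc 1 t) fun pr hpr => mem_product.2 (mem_filter.1 hpr).2.2, sum_product]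
  refine sum_congr rfl fun k hk => sum_congr rfl fun l hl => ?_
  rw [filter_filter, ← card_filter_disjoint_card_eq]
  congr 1
  ext pr
  simp only [mem_filter, mem_univ, true_and, Prod.mk.injEq]
  constructor
  · rintro ⟨⟨hd, -, -⟩, hk', hl'⟩
    exact ⟨hd, hk', hl'⟩
  · rintro ⟨hd, rfl, rfl⟩
    exact ⟨⟨hd, hk, hl⟩, rfl, rfl⟩

end Counting

section Atom

open Set
open scoped Finset

variable {A Q : Type*} (M : DFA A Q) (S : Set Q)

theorem mem_atom_append_iff (x z : List A) :
    x ++ z ∈ atom M S ↔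
      (∀ p ∈ (fun q => M.evalFrom q x) '' S, M.evalFrom p z ∈ M.accept) ∧
      ∀ p ∈ (fun q => M.evalFrom q x) '' Sᶜ, M.evalFrom p z ∉ M.accept := by
  simp only [atom, mem_ofPred_eq, DFA.evalFrom_of_append, forall_mem_image, mem_compl_iff]
  refine ⟨fun h => ⟨fun q hq => (h q).2 hq, fun q hq hacc => hq ((h q).1 hacc)⟩,
    fun h q => ⟨fun hacc => by_contra fun hq => h.2 hq hacc, fun hq => h.1 hq⟩⟩

theorem rightCong_atom_of_image_eq {x y : List A}
    (hS : (fun q => M.evalFrom q x) '' S = (fun q => M.evalFrom q y) '' S)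
    (hSc : (fun q => M.evalFrom q x) '' Sᶜ = (fun q => M.evalFrom q y) '' Sᶜ) :
    rightCong (atom M S) x y := fun z => by
  rw [mem_atom_append_iff, mem_atom_append_iff, hS, hSc]

open Classical in
/-- The data `(x·S, x·Sᶜ)` of a word `x` that can still be completed into the atom `A_S`, and
`none` for the single class of words that cannot. -/
noncomputable def atomCode [Fintype Q] (x : List A) : Option (Finset Q × Finset Q) :=
  if ∃ z, x ++ z ∈ atom M S then
    some (((fun q => M.evalFrom q x) '' S).toFinset, ((fun q => M.evalFrom q x) '' Sᶜ).toFinset)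
  else none

theorem rightCong_atom_of_atomCode_eq [Fintype Q] {x y : List A}
    (h : atomCode M S x = atomCode M S y) : rightCong (atom M S) x y := by
  unfold atomCode at h
  by_cases hx : ∃ z, x ++ z ∈ atom M S <;> by_cases hy : ∃ z, y ++ z ∈ atom M S
  · simp only [hx, hy, if_true, Option.some.injEq, Prod.mk.injEq, toFinset_inj] at h
    exact rightCong_atom_of_image_eq M S h.1 h.2
  · simp [hx, hy] at h
  · simp [hx, hy] at h
  · rw [not_exists] at hx hy
    exact fun z => iff_of_false (hx z) (hy z)

theorem range_atomCode_subset [Fintype Q] [DecidableEq Q] (hS : S.Nonempty) (hSc : Sᶜ.Nonempty) :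
    range (atomCode M S) ⊆
      insert none (some '' ↑(boundedDisjointPairs Q S.ncard Sᶜ.ncard)) := by
  rintro _ ⟨x, rfl⟩
  unfold atomCode
  split_ifs with hx
  · obtain ⟨z, hz⟩ := hx
    obtain ⟨hacc, hrej⟩ := (mem_atom_append_iff M S x z).1 hz
    refine mem_insert_of_mem _ (mem_image_of_mem _ ?_)
    simp only [boundedDisjointPairs, Finset.coe_filter, Finset.mem_univ, true_and,
      mem_ofPred_eq, Finset.mem_Icc, ← ncard_eq_toFinset_card', disjoint_toFinset]
    refine ⟨disjoint_left.2 fun p hpS hpSc => hrej p hpSc (hacc p hpS),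
      ⟨(hS.image _).ncard_pos, ncard_image_le S.toFinite⟩,
      ⟨(hSc.image _).ncard_pos, ncard_image_le Sᶜ.toFinite⟩⟩
  · exact mem_insert _ _

theorem exists_atomCode_eq_some_of_stateComplexity_eq [Fintype Q] [DecidableEq Q]
    (hS : S.Nonempty) (hSc : Sᶜ.Nonempty)
    (hsc : stateComplexity (atom M S) = 1 + #(boundedDisjointPairs Q S.ncard Sᶜ.ncard))
    {pr : Finset Q × Finset Q} (hpr : pr ∈ boundedDisjointPairs Q S.ncard Sᶜ.ncard) :
    ∃ x, atomCode M S x = some pr := by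
  set T := boundedDisjointPairs Q S.ncard Sᶜ.ncard
  set code : Quotient (rightCong (atom M S)) → Option (Finset Q × Finset Q) :=
    fun c => atomCode M S c.out
  have hcode : Injective code := fun c c' h =>
    Quotient.out_equiv_out.1 (rightCong_atom_of_atomCode_eq M S h)
  have hcard :
      (insert none (some '' ↑T) : Set (Option (Finset Q × Finset Q))).ncard = 1 + #T := by
    rw [ncard_insert_of_notMem (by simp), ncard_image_of_injective _ (Option.some_injective _),
      ncard_coe_finset, add_comm]
  have hrange : range code = insert none (some '' ↑T) :=
    eq_of_subset_of_ncard_le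
      ((range_comp_subset_range _ _).trans (range_atomCode_subset M S hS hSc))
      (by rw [hcard, ncard_range_of_injective hcode, ← hsc]; rfl)
  obtain ⟨c, hc⟩ : some pr ∈ range code :=
    hrange ▸ mem_insert_of_mem _ (mem_image_of_mem _ hpr)
  exact ⟨_, hc⟩

theorem Psi_eq_one_add_card_boundedDisjointPairs [Fintype Q] [DecidableEq Q]
    (hS : S.Nonempty) (hSc : Sᶜ.Nonempty) :
    Psi (Fintype.card Q) S.ncard = 1 + #(boundedDisjointPairs Q S.ncard Sᶜ.ncard) := by
  have hcompl : Sᶜ.ncard = Fintype.card Q - S.ncard := by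
    rw [ncard_compl, Nat.card_eq_fintype_card]
  have hpos : S.ncard ≠ 0 := hS.ncard_pos.ne'
  have hlt : S.ncard ≠ Fintype.card Q := by
    have := hSc.ncard_pos
    omega
  rw [Psi, if_neg (not_or.2 ⟨hpos, hlt⟩), card_boundedDisjointPairs, hcompl]

theorem exists_bijective_image_eq_of_stateComplexity_eq [Fintype Q]
    (hsc : stateComplexity (atom M S) = Psi (Fintype.card Q) S.ncard)
    {P : Set Q} (hP : P.ncard = S.ncard) :
    ∃ w : List A, Bijective (fun q => M.evalFrom q w) ∧ (fun q => M.evalFrom q w) '' S = P := by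
  classical
  rcases S.eq_empty_or_nonempty with rfl | hS
  · rw [ncard_empty, ncard_eq_zero] at hP
    exact ⟨[], bijective_id, by rw [hP, image_empty]⟩
  rcases Sᶜ.eq_empty_or_nonempty with hSc | hSc
  · rw [compl_empty_iff] at hSc
    subst hSc
    have hPuniv : P = univ := eq_of_subset_of_ncard_le (subset_univ P) hP.ge
    exact ⟨[], bijective_id, by rw [hPuniv]; exact image_univ_of_surjective surjective_id⟩
  have hPT : (P.toFinset, Pᶜ.toFinset) ∈ boundedDisjointPairs Q S.ncard Sᶜ.ncard := by
    have hPc : Pᶜ.ncard = Sᶜ.ncard := by rw [ncard_compl, ncard_compl, hP]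
    simp only [boundedDisjointPairs, Finset.mem_filter, Finset.mem_univ, true_and,
      Finset.mem_Icc, ← ncard_eq_toFinset_card', disjoint_toFinset, hP, hPc]
    exact ⟨disjoint_compl_right, ⟨hS.ncard_pos, le_rfl⟩, ⟨hSc.ncard_pos, le_rfl⟩⟩
  obtain ⟨x, hx⟩ := exists_atomCode_eq_some_of_stateComplexity_eq M S hS hSc
    (hsc.trans (Psi_eq_one_add_card_boundedDisjointPairs S hS hSc)) hPT
  unfold atomCode at hx
  split_ifs at hx
  simp only [Option.some.injEq, Prod.mk.injEq, toFinset_inj] at hx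
  refine ⟨x, Finite.surjective_iff_bijective.1 ?_, hx.1⟩
  rw [← range_eq_univ, ← image_univ, ← union_compl_self S, image_union, hx.1, hx.2,
    union_compl_self, union_compl_self]

end Atom

theorem statement4_general {A Q : Type*} [Fintype Q] (M : DFA A Q)
    (n : ℕ) (hQ : Fintype.card Q = n)
    (S : Set Q)
    (hsc : stateComplexity (atom M S) = Psi n S.ncard) :
    ∀ X Y : Set Q, X.ncard = S.ncard → Y.ncard = S.ncard →
      ∃ w : List A, Function.Bijective (fun q => M.evalFrom q w) ∧
        (fun q => M.evalFrom q w) '' X = Y := by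
  intro X Y hX hY
  subst hQ
  obtain ⟨u, hu, huX⟩ := exists_bijective_image_eq_of_stateComplexity_eq M S hsc hX
  obtain ⟨v, hv, hvY⟩ := exists_bijective_image_eq_of_stateComplexity_eq M S hsc hY
  exact M.exists_bijective_image_eq_of_image_eq hu huX hv hvY

/-- if an atom `A_S` of a minimal DFA with `n ≥ 3` states is
nonempty of maximal state complexity `Ψ(n, |S|)`, then `P(M)` is
`|S|`-set-transitive. -/
theorem statement4 {A Q : Type*} [Fintype A] [Fintype Q] (M : DFA A Q)
    (n : ℕ) (hQ : Fintype.card Q = n) (hn : 3 ≤ n) (hmin : IsMinimal M)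
    (S : Set Q) (hne : (atom M S).Nonempty)
    (hsc : stateComplexity (atom M S) = Psi n S.ncard) :
    ∀ X Y : Set Q, X.ncard = S.ncard → Y.ncard = S.ncard →
      ∃ w : List A, Function.Bijective (fun q => M.evalFrom q w) ∧
        (fun q => M.evalFrom q w) '' X = Y :=
  statement4_general M n hQ S hsc
end

section
/- Let M = (Q, Σ, δ, q₀, F) be a DFA in which every state is reachable from q₀, recognizing L = {w : q₀·w ∈ F}. Then for all words u, v ∈ Σ*: (∀ q ∈ Q, q·u ∈ F ↔ q·v ∈ F) if and only if u and v are related by the syntactic left congruence of L, i.e., ∀ z ∈ Σ*, zu ∈ L ↔ zv ∈ L. Consequently, the atoms of L are precisely the classes of the syntactic left congruence of L. -/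
namespace DFA

variable {A Q : Type*} (M : DFA A Q)

theorem forall_evalFrom_start_append_iff_of_surjective
    (hreach : Function.Surjective (M.evalFrom M.start)) (u v : List A) :
    (∀ z, M.evalFrom M.start (z ++ u) ∈ M.accept ↔ M.evalFrom M.start (z ++ v) ∈ M.accept) ↔
      ∀ q, M.evalFrom q u ∈ M.accept ↔ M.evalFrom q v ∈ M.accept := by
  simp only [evalFrom_of_append]
  exact (hreach.forall
    (p := fun q => M.evalFrom q u ∈ M.accept ↔ M.evalFrom q v ∈ M.accept)).symm

end DFA

theorem statement11_general {A Q : Type*} (M : DFA A Q)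
    (hreach : ∀ q : Q, ∃ w : List A, M.evalFrom M.start w = q)
    (L : Set (List A)) (hL : L = {w | M.evalFrom M.start w ∈ M.accept}) :
    (∀ u v : List A,
      (∀ q : Q, M.evalFrom q u ∈ M.accept ↔ M.evalFrom q v ∈ M.accept) ↔
      (∀ z : List A, z ++ u ∈ L ↔ z ++ v ∈ L)) ∧
    (∀ u : List A,
      atom M {q | M.evalFrom q u ∈ M.accept} =
        {v | ∀ z : List A, z ++ u ∈ L ↔ z ++ v ∈ L}) := by
  subst hL
  have acts_equally_iff_leftCongr (u v : List A) :=
    (M.forall_evalFrom_start_append_iff_of_surjective hreach u v).symm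
  refine ⟨acts_equally_iff_leftCongr, fun u => Set.ext fun v => ?_⟩
  change (∀ q, M.evalFrom q v ∈ M.accept ↔ M.evalFrom q u ∈ M.accept) ↔
    ∀ z, M.evalFrom M.start (z ++ u) ∈ M.accept ↔ M.evalFrom M.start (z ++ v) ∈ M.accept
  rw [← acts_equally_iff_leftCongr]
  exact forall_congr' fun _ => Iff.comm

/-- in a DFA all of whose states are reachable, two words act
equally on the states with respect to acceptance iff they are related by the
syntactic left congruence of the recognized language; consequently the atoms
are precisely the classes of the syntactic left congruence. -/
theorem statement11 {A Q : Type*} [Fintype A] [Fintype Q] (M : DFA A Q)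
    (hreach : ∀ q : Q, ∃ w : List A, M.evalFrom M.start w = q)
    (L : Set (List A)) (hL : L = {w | M.evalFrom M.start w ∈ M.accept}) :
    (∀ u v : List A,
      (∀ q : Q, M.evalFrom q u ∈ M.accept ↔ M.evalFrom q v ∈ M.accept) ↔
      (∀ z : List A, z ++ u ∈ L ↔ z ++ v ∈ L)) ∧
    (∀ u : List A,
      atom M {q | M.evalFrom q u ∈ M.accept} =
        {v | ∀ z : List A, z ++ u ∈ L ↔ z ++ v ∈ L}) :=
  statement11_general M hreach L hL
end

section
/- Let M = (Q, Σ, δ, q₀, F) be a DFA in which every state is reachable from q₀, recognizing L = {w : q₀·w ∈ F}. Then the number of subsets S ⊆ Q for which the atom A_S is nonempty equals the state complexity of the reversal language L^R = {w^R : w ∈ L} (the number of Myhill–Nerode right-congruence classes of L^R). -/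
/-!
The nonempty atoms are exactly the sets `{q | q·w ∈ F}` for words `w`. Since
`(xz)^R = z^R x^R`, the words `x` and `y` are right-congruent for `L^R` iff
`q₀·z^R·x^R ∈ F ↔ q₀·z^R·y^R ∈ F` for all `z`; as every state is of the form `q₀·z^R`,
this says that `x^R` and `y^R` determine the same atom. So the Myhill–Nerode classes of `L^R`
are in bijection with the nonempty atoms.
-/

namespace DFA

variable {A Q : Type*} (M : DFA A Q)

def acceptingSet (w : List A) : Set Q :=
  {q | M.evalFrom q w ∈ M.accept}

theorem atom_nonempty_iff_mem_range_acceptingSet (S : Set Q) :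
    (atom M S).Nonempty ↔ S ∈ Set.range M.acceptingSet := by
  constructor
  · rintro ⟨w, hw⟩
    exact ⟨w, Set.ext hw⟩
  · rintro ⟨w, rfl⟩
    exact ⟨w, fun _ => Iff.rfl⟩

theorem mem_reverse_image_iff (w : List A) :
    w ∈ List.reverse '' {v | M.evalFrom M.start v ∈ M.accept} ↔
      M.evalFrom M.start w.reverse ∈ M.accept := by
  constructor
  · rintro ⟨v, hv, rfl⟩
    rwa [List.reverse_reverse]
  · intro h
    exact ⟨w.reverse, h, List.reverse_reverse w⟩

theorem rightCong_reverse_eq_ker (hreach : ∀ q : Q, ∃ w : List A, M.evalFrom M.start w = q) :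
    rightCong (List.reverse '' {v | M.evalFrom M.start v ∈ M.accept}) =
      Setoid.ker (M.acceptingSet ∘ List.reverse) := by
  refine Setoid.ext fun x y => ?_
  change (∀ z, _) ↔ M.acceptingSet x.reverse = M.acceptingSet y.reverse
  simp only [mem_reverse_image_iff, List.reverse_append, evalFrom_of_append]
  constructor
  · intro h
    ext q
    obtain ⟨w, rfl⟩ := hreach q
    simpa [acceptingSet] using h w.reverse
  · intro h z
    exact Set.ext_iff.mp h _

end DFA

theorem statement12_general {A Q : Type*} (M : DFA A Q)
    (hreach : ∀ q : Q, ∃ w : List A, M.evalFrom M.start w = q)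
    (L : Set (List A)) (hL : L = {w | M.evalFrom M.start w ∈ M.accept}) :
    Nat.card {S : Set Q // (atom M S).Nonempty} =
      stateComplexity (List.reverse '' L) := by
  subst hL
  have atoms : {S : Set Q // (atom M S).Nonempty} ≃ Set.range M.acceptingSet :=
    Equiv.subtypeEquivRight M.atom_nonempty_iff_mem_range_acceptingSet
  rw [stateComplexity, M.rightCong_reverse_eq_ker hreach,
    Nat.card_congr (Setoid.quotientKerEquivRange _), List.reverse_surjective.range_comp,
    Nat.card_congr atoms]

/-- the number of nonempty atoms of a DFA all of whose states are
reachable equals the state complexity of the reversal of the recognized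
language. -/
theorem statement12 {A Q : Type*} [Fintype A] [Fintype Q] (M : DFA A Q)
    (hreach : ∀ q : Q, ∃ w : List A, M.evalFrom M.start w = q)
    (L : Set (List A)) (hL : L = {w | M.evalFrom M.start w ∈ M.accept}) :
    Nat.card {S : Set Q // (atom M S).Nonempty} =
      stateComplexity (List.reverse '' L) :=
  statement12_general M hreach L hL
end

section
/- Let M = (Q, Σ, δ, q₀, F) be a minimal DFA with |Q| = n ≥ 3, and suppose some word w₀ induces a transformation of Q of rank n − 1. Let X ⊆ Q with 1 ≤ |X| < n − 1 be such that A_X is nonempty and has state complexity Ψ(n, |X|). Then there exists Z ⊆ Q with |Z| = |X| + 1 such that A_Z is nonempty. -/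
/-!
The left quotient of the atom `A_X` by a word `v` is the set of words accepted from every
state of `v·X` and rejected from every state of `v·Xᶜ`. When it is nonempty, `(v·X, v·Xᶜ)` is
a pair of disjoint nonempty sets of sizes at most `|X|` and `n - |X|`; there are at most
`Ψ(n, |X|) - 1` such pairs, the remaining `1` accounting for the empty quotient. So an atom
of complexity `Ψ(n, |X|)` separates every such pair `(P, R)` by some word.

Let `w₀` have rank `n - 1` and identify the states `a ≠ b`. Choose `P ⊆ range w₀` with
`|P| = |X|` containing `a·w₀`, and a word `z` separating `P` from `range w₀ \ P`. Then `w₀ z`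
lies in `A_Z` for `Z = w₀⁻¹ P`, and `|Z| = |P| + 1` since `w₀` has rank `n - 1` and `P`
contains the image of the collapsed pair.
-/

open Set

lemma preimage_eq_iff_image_subset_and_disjoint {α β : Type*} (f : α → β) (X : Set α)
    (S : Set β) : f ⁻¹' S = X ↔ f '' X ⊆ S ∧ Disjoint (f '' Xᶜ) S := by
  rw [image_subset_iff, disjoint_image_left, disjoint_compl_left_iff_subset,
    subset_antisymm_iff, and_comm]

lemma ncard_le_ncard_preimage {α β : Type*} [Finite α] {f : α → β} {P : Set β}
    (hP : P ⊆ range f) : P.ncard ≤ (f ⁻¹' P).ncard := by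
  conv_lhs => rw [← image_preimage_eq_of_subset hP]
  exact ncard_image_le

lemma ncard_add_one_le_ncard_preimage {α β : Type*} [Finite α] {f : α → β} {P : Set β}
    (hP : P ⊆ range f) {a b : α} (hab : a ≠ b) (hfab : f a = f b) (ha : f a ∈ P) :
    P.ncard + 1 ≤ (f ⁻¹' P).ncard := by
  have himage : f '' (f ⁻¹' P \ {a}) = P := by
    refine (image_subset_iff.2 fun x hx => hx.1).antisymm fun p hp => ?_
    obtain ⟨x, rfl⟩ := hP hp
    by_cases hx : x = a
    · subst hx
      exact ⟨b, ⟨show f b ∈ P from hfab ▸ hp, hab.symm⟩, hfab.symm⟩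
    · exact ⟨x, ⟨hp, hx⟩, rfl⟩
  have hle : (f '' (f ⁻¹' P \ {a})).ncard ≤ (f ⁻¹' P \ {a}).ncard := ncard_image_le
  rw [himage] at hle
  rw [← ncard_sdiff_singleton_add_one (show a ∈ f ⁻¹' P from ha)]
  omega

lemma ncard_preimage_eq_add_one {α β : Type*} [Finite α] {f : α → β}
    (hrank : (range f).ncard + 1 = Nat.card α) {P : Set β} (hP : P ⊆ range f) {a b : α}
    (hab : a ≠ b) (hfab : f a = f b) (ha : f a ∈ P) : (f ⁻¹' P).ncard = P.ncard + 1 := by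
  have hlow := ncard_add_one_le_ncard_preimage hP hab hfab ha
  have hrest : (range f \ P).ncard ≤ (f ⁻¹' P)ᶜ.ncard := by
    simpa [preimage_sdiff, compl_eq_univ_sdiff] using
      ncard_le_ncard_preimage (sdiff_subset : range f \ P ⊆ range f)
  rw [ncard_sdiff hP ((finite_range f).subset hP), ncard_compl] at hrest
  have := ncard_le_ncard hP (finite_range f)
  have := ncard_le_card (f ⁻¹' P)
  omega

lemma exists_ne_map_eq_of_ncard_range_lt {α β : Type*} [Finite α] {f : α → β}
    (h : (range f).ncard < Nat.card α) : ∃ a b, a ≠ b ∧ f a = f b := by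
  by_contra! hinj
  exact h.ne (ncard_range_of_injective fun a b hab => by_contra fun hne => hinj a b hne hab)

section

variable {A Q : Type*}

def acceptingStates (M : DFA A Q) (w : List A) : Set Q :=
  {q | M.evalFrom q w ∈ M.accept}

def separatingWords (M : DFA A Q) (P R : Set Q) : Set (List A) :=
  {z | P ⊆ acceptingStates M z ∧ Disjoint R (acceptingStates M z)}

lemma mem_atom_iff (M : DFA A Q) (S : Set Q) (w : List A) :
    w ∈ atom M S ↔ acceptingStates M w = S := by
  simp only [atom, acceptingStates, Set.ext_iff, Set.mem_ofPred_eq]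

lemma acceptingStates_append (M : DFA A Q) (u v : List A) :
    acceptingStates M (u ++ v) = (M.evalFrom · u) ⁻¹' acceptingStates M v := by
  ext q
  simp [acceptingStates, DFA.evalFrom_of_append]

lemma leftQuotient_atom (M : DFA A Q) (X : Set Q) (v : List A) :
    {z | v ++ z ∈ atom M X} =
      separatingWords M ((M.evalFrom · v) '' X) ((M.evalFrom · v) '' Xᶜ) := by
  ext z
  rw [mem_ofPred_eq, mem_atom_iff, acceptingStates_append,
    preimage_eq_iff_image_subset_and_disjoint]
  rfl

lemma stateComplexity_eq_ncard_range (K : Set (List A)) :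
    stateComplexity K = (range fun v => {z | v ++ z ∈ K}).ncard := by
  rw [stateComplexity, ← Nat.card_coe_set_eq]
  refine Nat.card_congr (Equiv.ofBijective
    (Quotient.lift (s := rightCong K) (fun v => ⟨{z | v ++ z ∈ K}, v, rfl⟩)
      fun _ _ h => Subtype.ext (Set.ext h)) ⟨?_, ?_⟩)
  · rintro ⟨u⟩ ⟨v⟩ h
    exact Quotient.sound fun z => Set.ext_iff.mp (congrArg Subtype.val h) z
  · rintro ⟨_, v, rfl⟩
    exact ⟨⟦v⟧, rfl⟩

def admissiblePairs (s t : ℕ) : Set (Set Q × Set Q) :=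
  {p | p.1.Nonempty ∧ p.2.Nonempty ∧ Disjoint p.1 p.2 ∧ p.1.ncard ≤ s ∧ p.2.ncard ≤ t}

lemma ncard_admissiblePairs_le [Fintype Q] (s t : ℕ) :
    (admissiblePairs (Q := Q) s t).ncard ≤
      ∑ k ∈ Finset.Icc 1 s, ∑ l ∈ Finset.Icc 1 t,
        (Fintype.card Q).choose k * (Fintype.card Q - k).choose l := by
  classical
  set B : Finset (Set Q × Set Q) := (Finset.Icc 1 s ×ˢ Finset.Icc 1 t).biUnion fun kl =>
    (Finset.powersetCard kl.1 Finset.univ).biUnion fun P : Finset Q =>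
      (Finset.powersetCard kl.2 Pᶜ).image fun R : Finset Q => ((P : Set Q), (R : Set Q))
  have hsub : admissiblePairs s t ⊆ (B : Set (Set Q × Set Q)) := by
    rintro ⟨P, R⟩ ⟨hP, hR, hPR, hPs, hRt⟩
    simp only [B, Finset.coe_biUnion, Finset.coe_image, mem_iUnion, mem_image, Finset.mem_coe,
      Finset.mem_product, Finset.mem_Icc, Finset.mem_powersetCard, Prod.mk.injEq]
    refine ⟨(P.ncard, R.ncard), ⟨⟨hP.ncard_pos, hPs⟩, hR.ncard_pos, hRt⟩, P.toFinset, ?_,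
      R.toFinset, ?_, by simp, by simp⟩
    · simp [ncard_eq_toFinset_card']
    · simpa [ncard_eq_toFinset_card', Finset.subset_compl_iff_disjoint_left] using hPR
  calc (admissiblePairs s t).ncard ≤ B.card := by
        simpa only [ncard_coe_finset] using ncard_le_ncard hsub
    _ ≤ _ := by
      refine Finset.card_biUnion_le.trans ?_
      rw [Finset.sum_product]
      gcongr with k _ l _
      refine Finset.card_biUnion_le.trans ?_
      refine (Finset.sum_le_sum fun P hP => Finset.card_image_le).trans ?_
      rw [Finset.sum_congr rfl fun P hP => by
        rw [Finset.card_powersetCard, Finset.card_compl, (Finset.mem_powersetCard.mp hP).2]]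
      simp

lemma disjoint_of_mem_separatingWords {M : DFA A Q} {P R : Set Q} {z : List A}
    (hz : z ∈ separatingWords M P R) : Disjoint P R :=
  (hz.2.mono_right hz.1).symm

lemma acceptingStates_inter_eq_of_mem_separatingWords {M : DFA A Q} {P S : Set Q} {z : List A}
    (hP : P ⊆ S) (hz : z ∈ separatingWords M P (S \ P)) : acceptingStates M z ∩ S = P := by
  refine subset_antisymm (fun q ⟨hacc, hS⟩ => ?_) (subset_inter hz.1 hP)
  by_contra hq
  exact disjoint_left.mp hz.2 ⟨hS, hq⟩ hacc

lemma range_leftQuotient_atom_subset [Fintype Q] (M : DFA A Q) {X : Set Q} (hX : X.Nonempty)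
    (hXc : Xᶜ.Nonempty) :
    (range fun v => {z | v ++ z ∈ atom M X}) ⊆
      insert ∅ ((fun p => separatingWords M p.1 p.2) ''
        {p ∈ admissiblePairs X.ncard Xᶜ.ncard | (separatingWords M p.1 p.2).Nonempty}) := by
  rintro _ ⟨v, rfl⟩
  simp only [leftQuotient_atom]
  rcases eq_empty_or_nonempty
    (separatingWords M ((M.evalFrom · v) '' X) ((M.evalFrom · v) '' Xᶜ)) with h | h
  · exact Or.inl h
  · refine Or.inr ⟨((M.evalFrom · v) '' X, (M.evalFrom · v) '' Xᶜ),
      ⟨⟨hX.image _, hXc.image _, ?_, ncard_image_le X.toFinite, ncard_image_le Xᶜ.toFinite⟩, h⟩,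
      rfl⟩
    obtain ⟨z, hz⟩ := h
    exact disjoint_of_mem_separatingWords hz

theorem nonempty_separatingWords_of_stateComplexity_eq_Psi [Fintype Q] (M : DFA A Q)
    {X : Set Q} (hX : X.Nonempty) (hXc : Xᶜ.Nonempty)
    (hsc : stateComplexity (atom M X) = Psi (Fintype.card Q) X.ncard)
    {p : Set Q × Set Q} (hp : p ∈ admissiblePairs X.ncard Xᶜ.ncard) :
    (separatingWords M p.1 p.2).Nonempty := by
  by_contra hempty
  set G := {p ∈ admissiblePairs X.ncard Xᶜ.ncard | (separatingWords M p.1 p.2).Nonempty}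
  have hG : G.ncard < (admissiblePairs (Q := Q) X.ncard Xᶜ.ncard).ncard :=
    ncard_lt_ncard ⟨sep_subset _ _, fun h => hempty (h hp).2⟩
  have hXc_card : Xᶜ.ncard = Fintype.card Q - X.ncard := by
    rw [ncard_compl, Nat.card_eq_fintype_card]
  have hPsi : Psi (Fintype.card Q) X.ncard = 1 + ∑ k ∈ Finset.Icc 1 X.ncard,
      ∑ l ∈ Finset.Icc 1 Xᶜ.ncard,
        (Fintype.card Q).choose k * (Fintype.card Q - k).choose l := by
    have := hX.ncard_pos
    have := hXc.ncard_pos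
    rw [Psi, if_neg (by omega), hXc_card]
  have hcount := ncard_admissiblePairs_le (Q := Q) X.ncard Xᶜ.ncard
  have hquot : stateComplexity (atom M X) ≤ G.ncard + 1 :=
    calc stateComplexity (atom M X) = (range fun v => {z | v ++ z ∈ atom M X}).ncard :=
          stateComplexity_eq_ncard_range _
      _ ≤ (insert ∅ ((fun p => separatingWords M p.1 p.2) '' G)).ncard :=
          ncard_le_ncard (range_leftQuotient_atom_subset M hX hXc)
      _ ≤ ((fun p => separatingWords M p.1 p.2) '' G).ncard + 1 := ncard_insert_le _ _
      _ ≤ G.ncard + 1 := by gcongr; exact ncard_image_le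
  omega
end

theorem statement13_general {A Q : Type*} [Fintype Q] (M : DFA A Q)
    (n : ℕ) (hQ : Fintype.card Q = n)
    (w₀ : List A) (hrank : (Set.range (fun q => M.evalFrom q w₀)).ncard = n - 1)
    (X : Set Q) (hX1 : 1 ≤ X.ncard) (hX2 : X.ncard < n - 1)
    (hsc : stateComplexity (atom M X) = Psi n X.ncard) :
    ∃ Z : Set Q, Z.ncard = X.ncard + 1 ∧ (atom M Z).Nonempty := by
  set f : Q → Q := (M.evalFrom · w₀)
  have hcard : Nat.card Q = n := Nat.card_eq_fintype_card.trans hQ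
  have hX : X.Nonempty := nonempty_of_ncard_ne_zero (by omega)
  have hXc : Xᶜ.ncard = n - X.ncard := by rw [ncard_compl, hcard]
  obtain ⟨a, b, hab, hfab⟩ := exists_ne_map_eq_of_ncard_range_lt (f := f) (by omega)
  obtain ⟨P, haP, hPf, hPX⟩ := exists_subsuperset_card_eq
    (singleton_subset_iff.2 (mem_range_self a)) (by rw [ncard_singleton]; exact hX1)
    (by omega : X.ncard ≤ (range f).ncard)
  have hrest : (range f \ P).ncard = n - 1 - X.ncard := by rw [ncard_sdiff hPf, hrank, hPX]
  have hR : (range f \ P).Nonempty := nonempty_of_ncard_ne_zero (by omega)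
  have hadm : (P, range f \ P) ∈ admissiblePairs X.ncard Xᶜ.ncard :=
    ⟨⟨f a, haP rfl⟩, hR, disjoint_sdiff_right, hPX.le,
      show (range f \ P).ncard ≤ Xᶜ.ncard by omega⟩
  obtain ⟨z, hz⟩ := nonempty_separatingWords_of_stateComplexity_eq_Psi M hX
    (nonempty_of_ncard_ne_zero (by omega)) (hQ ▸ hsc) hadm
  refine ⟨acceptingStates M (w₀ ++ z), ?_, w₀ ++ z, (mem_atom_iff _ _ _).2 rfl⟩
  rw [acceptingStates_append, ← preimage_inter_range,
    acceptingStates_inter_eq_of_mem_separatingWords hPf hz,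
    ncard_preimage_eq_add_one (by omega) hPf hab hfab (haP rfl), hPX]

/-- in a minimal DFA with `n ≥ 3` states having a word inducing a
transformation of rank `n - 1`, if `A_X` with `1 ≤ |X| < n - 1` is a nonempty
atom of maximal state complexity, then some `A_Z` with `|Z| = |X| + 1` is a
nonempty atom. -/
theorem statement13 {A Q : Type*} [Fintype A] [Fintype Q] (M : DFA A Q)
    (n : ℕ) (hQ : Fintype.card Q = n) (hn : 3 ≤ n) (hmin : IsMinimal M)
    (w₀ : List A) (hrank : (Set.range (fun q => M.evalFrom q w₀)).ncard = n - 1)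
    (X : Set Q) (hX1 : 1 ≤ X.ncard) (hX2 : X.ncard < n - 1)
    (hne : (atom M X).Nonempty)
    (hsc : stateComplexity (atom M X) = Psi n X.ncard) :
    ∃ Z : Set Q, Z.ncard = X.ncard + 1 ∧ (atom M Z).Nonempty :=
  statement13_general M n hQ w₀ hrank X hX1 hX2 hsc
end

section
/- Let M = (Q, Σ, δ, q₀, F) be a DFA with |Q| = n > 2 and ∅ ≠ F ⊊ Q, and suppose every singular (non-bijective) transformation of Q is induced by some nonempty word. Then for all disjoint subsets S, T ⊆ Q there exists a word w with S·w ⊆ F and T·w ⊆ Q ∖ F; that is, the language L_{S,T} = {w : S·w ⊆ F and T·w ⊆ Q ∖ F} is nonempty. -/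
/-! The transformation sending `S` to an accepting state and every other state to a rejecting
state takes at most two values, so with more than two states it is singular and hence induced by
a word; that word lies in `L_{S,T}` because `T` misses `S`. -/

theorem Function.not_surjective_of_forall_eq_or_eq {α β : Type*} [Fintype β]
    (hβ : 2 < Fintype.card β) (f : α → β) {a b : β} (hf : ∀ x, f x = a ∨ f x = b) :
    ¬ Function.Surjective f := by
  classical
  intro hsurj
  have huniv : (Finset.univ : Finset β) ⊆ {a, b} := by
    intro y _
    obtain ⟨x, rfl⟩ := hsurj y
    rcases hf x with h | h <;> simp [h]
  have := (Finset.card_le_card huniv).trans Finset.card_le_two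
  rw [Finset.card_univ] at this
  omega

theorem statement15_general {A Q : Type*} [Fintype Q] (M : DFA A Q)
    (n : ℕ) (hQ : Fintype.card Q = n) (hn : 2 < n)
    (hF1 : M.accept.Nonempty) (hF2 : M.accept ≠ Set.univ)
    (hsing : ∀ f : Q → Q, ¬ Function.Bijective f →
      ∃ w : List A, w ≠ [] ∧ (fun q => M.evalFrom q w) = f) :
    ∀ S T : Set Q, Disjoint S T →
      ∃ w : List A, (fun q => M.evalFrom q w) '' S ⊆ M.accept ∧
        (fun q => M.evalFrom q w) '' T ⊆ M.acceptᶜ := by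
  classical
  intro S T hST
  obtain ⟨a, ha⟩ := hF1
  obtain ⟨b, hb⟩ := (Set.ne_univ_iff_exists_notMem _).1 hF2
  have hsingular : ¬ Function.Bijective fun q => if q ∈ S then a else b := fun hbij =>
    Function.not_surjective_of_forall_eq_or_eq (hQ ▸ hn) _ (a := a) (b := b)
      (fun q => by by_cases hq : q ∈ S <;> simp [hq]) hbij.2
  obtain ⟨w, -, hw⟩ := hsing _ hsingular
  refine ⟨w, ?_, ?_⟩
  · rintro _ ⟨q, hq, rfl⟩
    simpa [congrFun hw q, hq] using ha
  · rintro _ ⟨q, hq, rfl⟩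
    simpa [congrFun hw q, hST.notMem_of_mem_right hq] using hb

/-- in a DFA with `n > 2` states and `∅ ≠ F ⊊ Q` whose
transformation semigroup contains every singular transformation, the language
`L_{S,T}` is nonempty for every pair of disjoint subsets `S, T ⊆ Q`. -/
theorem statement15 {A Q : Type*} [Fintype A] [Fintype Q] (M : DFA A Q)
    (n : ℕ) (hQ : Fintype.card Q = n) (hn : 2 < n)
    (hF1 : M.accept.Nonempty) (hF2 : M.accept ≠ Set.univ)
    (hsing : ∀ f : Q → Q, ¬ Function.Bijective f →
      ∃ w : List A, w ≠ [] ∧ (fun q => M.evalFrom q w) = f) :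
    ∀ S T : Set Q, Disjoint S T →
      ∃ w : List A, (fun q => M.evalFrom q w) '' S ⊆ M.accept ∧
        (fun q => M.evalFrom q w) '' T ⊆ M.acceptᶜ :=
  statement15_general M n hQ hn hF1 hF2 hsing
end

section
/- Let M = (Q, Σ, δ, q₀, F) be a DFA with |Q| = n > 2 and ∅ ≠ F ⊊ Q, and suppose every singular (non-bijective) transformation of Q is induced by some nonempty word. Then for all pairs of disjoint subsets (S, T) and (S', T') of Q with (S, T) ≠ (S', T'), there exists a word w such that exactly one of the two conditions [S·w ⊆ F and T·w ⊆ Q ∖ F] and [S'·w ⊆ F and T'·w ⊆ Q ∖ F] holds; that is, the languages L_{S,T} and L_{S',T'} are distinct. -/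
/-!
A word `w` satisfies `S·w ⊆ F` and `T·w ⊆ Q ∖ F` exactly when `U = f_w⁻¹(F)` lies in the
interval `[S, Q ∖ T]` of the subset lattice. Distinct disjoint pairs give distinct nonempty
intervals, so some `U` lies in exactly one of them. Sending `U` to a final state and its
complement to a non-final one is a transformation with at most two values, hence singular
when `n > 2`, and so it is induced by a word.
-/

theorem exists_xor_subset_disjoint {α : Type*} {S T S' T' : Set α}
    (hST : Disjoint S T) (hST' : Disjoint S' T') (hne : (S, T) ≠ (S', T')) :
    ∃ U : Set α, Xor (S ⊆ U ∧ Disjoint T U) (S' ⊆ U ∧ Disjoint T' U) := by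
  by_contra! h
  have hIcc : Set.Icc S Tᶜ = Set.Icc S' T'ᶜ := by
    ext U
    simpa only [Set.mem_Icc, Set.subset_compl_iff_disjoint_left, not_xor] using h U
  obtain ⟨rfl, hT⟩ :=
    (Set.Icc_eq_Icc_iff (Set.subset_compl_iff_disjoint_right.mpr hST)).mp hIcc
  exact hne (by rw [compl_inj_iff.mp hT])

theorem exists_not_bijective_preimage_eq {α : Type*} [Fintype α] (hcard : 2 < Fintype.card α)
    {F : Set α} (hF₁ : F.Nonempty) (hF₂ : F ≠ Set.univ) (U : Set α) :
    ∃ f : α → α, ¬ Function.Bijective f ∧ f ⁻¹' F = U := by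
  classical
  obtain ⟨a, ha⟩ := hF₁
  obtain ⟨r, hr⟩ := (Set.ne_univ_iff_exists_notMem F).mp hF₂
  refine ⟨fun p => if p ∈ U then a else r, fun hbij => ?_, ?_⟩
  · have hrange : Set.range (fun p => if p ∈ U then a else r) ⊆ {a, r} := by
      rintro _ ⟨p, rfl⟩
      by_cases hp : p ∈ U <;> simp [hp]
    have := Set.ncard_le_ncard hrange (Set.toFinite _)
    rw [hbij.surjective.range_eq, Set.ncard_univ, Nat.card_eq_fintype_card] at this
    have := Set.ncard_insert_le a {r}
    rw [Set.ncard_singleton] at this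
    omega
  · ext p
    by_cases hp : p ∈ U <;> simp [hp, ha, hr]

theorem statement16_general {A Q : Type*} [Fintype Q] (M : DFA A Q)
    (n : ℕ) (hQ : Fintype.card Q = n) (hn : 2 < n)
    (hF1 : M.accept.Nonempty) (hF2 : M.accept ≠ Set.univ)
    (hsing : ∀ f : Q → Q, ¬ Function.Bijective f →
      ∃ w : List A, w ≠ [] ∧ (fun q => M.evalFrom q w) = f) :
    ∀ S T S' T' : Set Q, Disjoint S T → Disjoint S' T' → (S, T) ≠ (S', T') →
      ∃ w : List A,
        Xor' ((fun q => M.evalFrom q w) '' S ⊆ M.accept ∧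
              (fun q => M.evalFrom q w) '' T ⊆ M.acceptᶜ)
             ((fun q => M.evalFrom q w) '' S' ⊆ M.accept ∧
              (fun q => M.evalFrom q w) '' T' ⊆ M.acceptᶜ) := by
  intro S T S' T' hST hST' hne
  obtain ⟨U, hU⟩ := exists_xor_subset_disjoint hST hST' hne
  obtain ⟨f, hf, hpre⟩ := exists_not_bijective_preimage_eq (hQ ▸ hn) hF1 hF2 U
  obtain ⟨w, -, hw⟩ := hsing f hf
  refine ⟨w, ?_⟩
  simp only [hw, Set.image_subset_iff, Set.preimage_compl, hpre]
  simp only [Set.subset_compl_iff_disjoint_right]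
  exact hU

/-- in a DFA with `n > 2` states and `∅ ≠ F ⊊ Q` whose
transformation semigroup contains every singular transformation, distinct pairs
of disjoint subsets yield distinct languages `L_{S,T}`: some word satisfies
exactly one of the two membership conditions. -/
theorem statement16 {A Q : Type*} [Fintype A] [Fintype Q] (M : DFA A Q)
    (n : ℕ) (hQ : Fintype.card Q = n) (hn : 2 < n)
    (hF1 : M.accept.Nonempty) (hF2 : M.accept ≠ Set.univ)
    (hsing : ∀ f : Q → Q, ¬ Function.Bijective f →
      ∃ w : List A, w ≠ [] ∧ (fun q => M.evalFrom q w) = f) :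
    ∀ S T S' T' : Set Q, Disjoint S T → Disjoint S' T' → (S, T) ≠ (S', T') →
      ∃ w : List A,
        Xor' ((fun q => M.evalFrom q w) '' S ⊆ M.accept ∧
              (fun q => M.evalFrom q w) '' T ⊆ M.acceptᶜ)
             ((fun q => M.evalFrom q w) '' S' ⊆ M.accept ∧
              (fun q => M.evalFrom q w) '' T' ⊆ M.acceptᶜ) :=
  statement16_general M n hQ hn hF1 hF2 hsing
end

section
/- Let M = (Q, Σ, δ, q₀, F) be a DFA with |Q| = n, and let S ⊆ Q with 1 ≤ |S| ≤ n − 1. Suppose every singular (non-bijective) transformation of Q is induced by some nonempty word, and that P(M) is |S|-set-transitive. Then for all disjoint subsets S', T' ⊆ Q with 1 ≤ |S'| ≤ |S| and 1 ≤ |T'| ≤ n − |S|, there exists a word w with S·w = S' and (Q ∖ S)·w = T'. -/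
/-!
Build the transformation first: any map sending `S` onto `S'` and `Q ∖ S` onto `T'` exists as
soon as the target sets are nonempty and no larger than their sources. If that map is singular,
some word induces it. If it is a permutation, then `|S'| = |S|`, so set-transitivity gives a
permuting word `w` with `S·w = S'`; being a bijection, `w` then maps `Q ∖ S` onto `Q ∖ S' = T'`.
-/

open Set Function

theorem Set.exists_image_eq_of_ncard_le {α β : Type*} {X : Set α} {Y : Set β}
    (hYfin : Y.Finite) (hY : Y.Nonempty) (h : Y.ncard ≤ X.ncard) : ∃ g : α → β, g '' X = Y := by
  classical
  have hXpos : 0 < X.ncard := ((ncard_pos hYfin).2 hY).trans_le h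
  have hX : X.Nonempty := nonempty_of_ncard_ne_zero hXpos.ne'
  have hXfin : X.Finite := finite_of_ncard_pos hXpos
  have : Nonempty α := hX.to_subtype.map Subtype.val
  obtain ⟨y₀, hy₀⟩ := hY
  have : Nonempty β := ⟨y₀⟩
  obtain ⟨i, hiY, hinj⟩ := hYfin.exists_injOn_of_encard_le (t := X) <| by
    rwa [← hYfin.cast_ncard_eq, ← hXfin.cast_ncard_eq, Nat.cast_le]
  -- `g` inverts `i` on `i '' Y` and sends the rest of `X` to `y₀`
  refine ⟨(i '' Y).piecewise (invFunOn i Y) fun _ ↦ y₀, subset_antisymm ?_ fun y hy ↦ ?_⟩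
  · rintro _ ⟨x, -, rfl⟩
    by_cases hx : x ∈ i '' Y
    · rw [piecewise_eq_of_mem _ _ _ hx]
      exact invFunOn_mem hx
    · rwa [piecewise_eq_of_notMem _ _ _ hx]
  · refine ⟨i y, hiY hy, ?_⟩
    rw [piecewise_eq_of_mem _ _ _ (mem_image_of_mem i hy)]
    exact hinj.leftInvOn_invFunOn hy

theorem Set.exists_image_eq_and_image_compl_eq {α : Type*} [Finite α] {S S' T' : Set α}
    (hS' : S'.Nonempty) (hT' : T'.Nonempty) (hS'S : S'.ncard ≤ S.ncard)
    (hT'S : T'.ncard ≤ Sᶜ.ncard) : ∃ f : α → α, f '' S = S' ∧ f '' Sᶜ = T' := by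
  classical
  obtain ⟨g, hg⟩ := exists_image_eq_of_ncard_le (toFinite S') hS' hS'S
  obtain ⟨h, hh⟩ := exists_image_eq_of_ncard_le (toFinite T') hT' hT'S
  exact ⟨S.piecewise g h, by rw [← hg, (piecewise_eqOn S g h).image_eq],
    by rw [← hh, (piecewise_eqOn_compl S g h).image_eq]⟩

theorem statement17_general {A Q : Type*} [Fintype Q] (M : DFA A Q)
    (n : ℕ) (hQ : Fintype.card Q = n) (S : Set Q)
    (hsing : ∀ f : Q → Q, ¬ Function.Bijective f →
      ∃ w : List A, w ≠ [] ∧ (fun q => M.evalFrom q w) = f)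
    (htrans : ∀ X Y : Set Q, X.ncard = S.ncard → Y.ncard = S.ncard →
      ∃ w : List A, Function.Bijective (fun q => M.evalFrom q w) ∧
        (fun q => M.evalFrom q w) '' X = Y) :
    ∀ S' T' : Set Q, Disjoint S' T' →
      1 ≤ S'.ncard → S'.ncard ≤ S.ncard →
      1 ≤ T'.ncard → T'.ncard ≤ n - S.ncard →
      ∃ w : List A, (fun q => M.evalFrom q w) '' S = S' ∧
        (fun q => M.evalFrom q w) '' Sᶜ = T' := by
  intro S' T' _ hS'pos hS'S hT'pos hT'S
  have hSc : Sᶜ.ncard = n - S.ncard := by rw [ncard_compl, Nat.card_eq_fintype_card, hQ]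
  obtain ⟨f, hfS, hfSc⟩ := exists_image_eq_and_image_compl_eq
    (nonempty_of_ncard_ne_zero (by omega)) (nonempty_of_ncard_ne_zero (by omega)) hS'S
    (hSc ▸ hT'S)
  by_cases hf : Bijective f
  · obtain ⟨w, hw, hwS⟩ := htrans S S' rfl (by rw [← hfS, ncard_image_of_injective _ hf.1])
    refine ⟨w, hwS, ?_⟩
    rw [image_compl_eq hw, hwS, ← hfSc, image_compl_eq hf, hfS]
  · obtain ⟨w, -, hw⟩ := hsing f hf
    exact ⟨w, by rw [hw]; exact ⟨hfS, hfSc⟩⟩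

/-- if the transformation semigroup of a DFA contains every
singular transformation and `P(M)` is `|S|`-set-transitive, where
`1 ≤ |S| ≤ n - 1`, then every pair `(S', T')` of disjoint subsets with
`1 ≤ |S'| ≤ |S|` and `1 ≤ |T'| ≤ n - |S|` is reached from `(S, Q ∖ S)` by
some word. -/
theorem statement17 {A Q : Type*} [Fintype A] [Fintype Q] (M : DFA A Q)
    (n : ℕ) (hQ : Fintype.card Q = n) (S : Set Q)
    (hS1 : 1 ≤ S.ncard) (hS2 : S.ncard ≤ n - 1)
    (hsing : ∀ f : Q → Q, ¬ Function.Bijective f →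
      ∃ w : List A, w ≠ [] ∧ (fun q => M.evalFrom q w) = f)
    (htrans : ∀ X Y : Set Q, X.ncard = S.ncard → Y.ncard = S.ncard →
      ∃ w : List A, Function.Bijective (fun q => M.evalFrom q w) ∧
        (fun q => M.evalFrom q w) '' X = Y) :
    ∀ S' T' : Set Q, Disjoint S' T' →
      1 ≤ S'.ncard → S'.ncard ≤ S.ncard →
      1 ≤ T'.ncard → T'.ncard ≤ n - S.ncard →
      ∃ w : List A, (fun q => M.evalFrom q w) '' S = S' ∧
        (fun q => M.evalFrom q w) '' Sᶜ = T' :=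
  statement17_general M n hQ S hsing htrans
end
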